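/- For R ≥ 2 and 1 ≤ M ≤ R, the number of pairs (x, y) ∈ ℤ² × ℤ² with ‖x‖ = ‖y‖ ≤ R and 0 < ‖x − y‖ < M is O(M·R·log R). -/

import Mathlib

/-!
If `x ≠ y` lie on a common circle about the origin, then `u = x - y` and `v = x + y` are
orthogonal. Writing `u = g • w` with `g` the gcd of the coordinates of `u` and `w` primitive,
orthogonality forces `v = t • w⊥` for an integer `t`, and `(x, y)` is recovered from `(g, w, t)`.
With `k = ‖w‖∞` we get `g k < M` and `|t| k ≤ 2R`. So for each `g ≤ M` there are at most `M / g`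
values of `k`, `8 k` vectors `w` with `‖w‖∞ = k` and `O(R / k)` values of `t`, i.e. `O(M R / g)`
triples; summing over `g` gives `O(M R log M)`.
-/

open Finset

namespace LatticeChord

lemma exists_eq_rotate_of_isCoprime {a b c d : ℤ} (hab : IsCoprime a b) (h : a * c + b * d = 0) :
    ∃ t : ℤ, c = -(t * b) ∧ d = t * a := by
  obtain ⟨r, s, hrs⟩ := hab
  exact ⟨r * d - s * c, by linear_combination (-c) * hrs + r * h,
    by linear_combination (-d) * hrs + s * h⟩

lemma exists_sub_eq_smul_add_eq_smul_rotate {x y : ℤ × ℤ} (hxy : x ≠ y)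
    (hxy_norm : x.1 ^ 2 + x.2 ^ 2 = y.1 ^ 2 + y.2 ^ 2) :
    ∃ g : ℕ, 0 < g ∧ ∃ w : ℤ × ℤ, w ≠ 0 ∧ ∃ t : ℤ,
      x - y = (g : ℤ) • w ∧ x + y = t • (-w.2, w.1) := by
  have hu : x.1 - y.1 ≠ 0 ∨ x.2 - y.2 ≠ 0 := by
    by_contra! h
    exact hxy (Prod.ext (by omega) (by omega))
  obtain ⟨g, w₁, w₂, hg, hw, h₁, h₂⟩ := Int.exists_gcd_one' (Int.gcd_pos_iff.mpr hu)
  have hw_ne : (w₁, w₂) ≠ 0 := by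
    intro h0
    obtain ⟨rfl, rfl⟩ := Prod.mk_eq_zero.mp h0
    simp only [zero_mul] at h₁ h₂
    omega
  have hperp : w₁ * (x.1 + y.1) + w₂ * (x.2 + y.2) = 0 := by
    have : (g : ℤ) * (w₁ * (x.1 + y.1) + w₂ * (x.2 + y.2)) = 0 := by
      linear_combination -(x.1 + y.1) * h₁ - (x.2 + y.2) * h₂ + hxy_norm
    simpa [hg.ne'] using this
  obtain ⟨t, ht₁, ht₂⟩ :=
    exists_eq_rotate_of_isCoprime (Int.isCoprime_iff_gcd_eq_one.mpr hw) hperp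
  refine ⟨g, hg, (w₁, w₂), hw_ne, t, Prod.ext ?_ ?_, Prod.ext ?_ ?_⟩ <;>
    simp only [Prod.fst_sub, Prod.snd_sub, Prod.fst_add, Prod.snd_add, Prod.smul_fst,
      Prod.smul_snd, smul_eq_mul] <;> linarith

lemma sq_max_natAbs_le (a b : ℤ) : ((max a.natAbs b.natAbs : ℕ) : ℤ) ^ 2 ≤ a ^ 2 + b ^ 2 := by
  rcases le_total a.natAbs b.natAbs with h | h <;>
    simp only [h, max_eq_left, max_eq_right, Int.natCast_natAbs, sq_abs] <;>
    linarith [sq_nonneg a, sq_nonneg b]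

lemma injective_sub_add :
    Function.Injective fun p : (ℤ × ℤ) × (ℤ × ℤ) => (p.1 - p.2, p.1 + p.2) := by
  intro p q h
  simp only [Prod.ext_iff, Prod.fst_sub, Prod.snd_sub, Prod.fst_add, Prod.snd_add] at h ⊢
  omega

noncomputable def chordParams (n : ℕ) (R : ℝ) : Finset (ℕ × (ℤ × ℤ) × ℤ) :=
  (Icc 1 n).biUnion fun g => (Icc 1 (n / g)).biUnion fun k =>
    {g} ×ˢ box k ×ˢ Icc (-⌊2 * R / k⌋) ⌊2 * R / k⌋

def chordVectors (q : ℕ × (ℤ × ℤ) × ℤ) : (ℤ × ℤ) × (ℤ × ℤ) :=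
  ((q.1 : ℤ) • q.2.1, q.2.2 • (-q.2.1.2, q.2.1.1))

lemma card_Icc_neg_floor_le {a : ℝ} (ha : 0 ≤ a) : (#(Icc (-⌊a⌋) ⌊a⌋) : ℝ) ≤ 2 * a + 1 := by
  have h0 : 0 ≤ ⌊a⌋ := Int.floor_nonneg.mpr ha
  rw [Int.card_Icc, show ⌊a⌋ + 1 - -⌊a⌋ = 2 * ⌊a⌋ + 1 by ring, ← Int.cast_natCast,
    Int.toNat_of_nonneg (by omega)]
  push_cast
  linarith [Int.floor_le a]

lemma card_box_mul_card_Icc_le {k : ℕ} {R : ℝ} (hk : 0 < k) (hkR : k ≤ R) :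
    (#(box k : Finset (ℤ × ℤ)) * #(Icc (-⌊2 * R / k⌋) ⌊2 * R / k⌋) : ℝ) ≤ 40 * R := by
  have hk' : (0 : ℝ) < k := by exact_mod_cast hk
  have hR : 0 ≤ R := by linarith
  rw [Int.card_box hk.ne']
  calc ((8 * k : ℕ) : ℝ) * #(Icc (-⌊2 * R / k⌋) ⌊2 * R / k⌋)
      ≤ 8 * k * (2 * (2 * R / k) + 1) := by
        push_cast
        gcongr
        exact card_Icc_neg_floor_le (by positivity)
    _ = 32 * R + 8 * k := by field_simp; ring
    _ ≤ 40 * R := by linarith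

lemma sum_Icc_div_le (n : ℕ) :
    ∑ g ∈ Icc 1 n, ((n / g : ℕ) : ℝ) ≤ n * (1 + Real.log n) := by
  calc ∑ g ∈ Icc 1 n, ((n / g : ℕ) : ℝ) ≤ ∑ g ∈ Icc 1 n, (n : ℝ) * (g : ℝ)⁻¹ :=
        sum_le_sum fun g _ => by simpa [div_eq_mul_inv] using Nat.cast_div_le
    _ = n * harmonic n := by simp [← mul_sum, harmonic_eq_sum_Icc]
    _ ≤ n * (1 + Real.log n) := by gcongr; exact harmonic_le_one_add_log n

lemma card_chordParams_le {n : ℕ} {R : ℝ} (hnR : n ≤ R) :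
    (#(chordParams n R) : ℝ) ≤ 40 * R * n * (1 + Real.log n) := by
  have hR : 0 ≤ R := (Nat.cast_nonneg n).trans hnR
  calc (#(chordParams n R) : ℝ)
      ≤ ∑ g ∈ Icc 1 n, ∑ k ∈ Icc 1 (n / g),
          (#(box k : Finset (ℤ × ℤ)) * #(Icc (-⌊2 * R / k⌋) ⌊2 * R / k⌋) : ℝ) := by
        norm_cast
        refine card_biUnion_le.trans (sum_le_sum fun g _ => card_biUnion_le.trans ?_)
        simp [card_product]
    _ ≤ ∑ g ∈ Icc 1 n, ∑ k ∈ Icc 1 (n / g), 40 * R := by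
        refine sum_le_sum fun g _ => sum_le_sum fun k hk => ?_
        obtain ⟨hk1, hkn⟩ := mem_Icc.mp hk
        refine card_box_mul_card_Icc_le hk1 (le_trans ?_ hnR)
        exact_mod_cast hkn.trans (Nat.div_le_self n g)
    _ = 40 * R * ∑ g ∈ Icc 1 n, ((n / g : ℕ) : ℝ) := by simp [mul_sum, mul_comm]
    _ ≤ 40 * R * (n * (1 + Real.log n)) := by gcongr; exact sum_Icc_div_le n
    _ = 40 * R * n * (1 + Real.log n) := by ring

lemma mem_chordParams {n g k : ℕ} {R : ℝ} {w : ℤ × ℤ} {t : ℤ} (hg : 0 < g) (hk : 0 < k)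
    (hw : w ∈ box k) (hgk : g * k ≤ n) (ht : |(t : ℝ)| * k ≤ 2 * R) :
    (g, w, t) ∈ chordParams n R := by
  simp only [chordParams, mem_biUnion, mem_product, mem_singleton, mem_Icc]
  refine ⟨g, ⟨hg, (Nat.le_mul_of_pos_right g hk).trans hgk⟩, k,
    ⟨hk, (Nat.le_div_iff_mul_le hg).mpr (by linarith)⟩, rfl, hw, abs_le.mp ?_⟩
  exact Int.le_floor.mpr ((le_div_iff₀ (by exact_mod_cast hk)).mpr (mod_cast ht))

lemma sub_add_mem_image_chordVectors {R M : ℝ} (hR : 0 ≤ R) (hM : 0 ≤ M) {x y : ℤ × ℤ}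
    (hxy_norm : x.1 ^ 2 + x.2 ^ 2 = y.1 ^ 2 + y.2 ^ 2)
    (hxR : ((x.1 ^ 2 + x.2 ^ 2 : ℤ) : ℝ) ≤ R ^ 2) (hxy : x ≠ y)
    (hxyM : (((x.1 - y.1) ^ 2 + (x.2 - y.2) ^ 2 : ℤ) : ℝ) < M ^ 2) :
    (x - y, x + y) ∈ (chordParams ⌊M⌋₊ R).image chordVectors := by
  obtain ⟨g, hg, w, hw, t, hu, hv⟩ := exists_sub_eq_smul_add_eq_smul_rotate hxy hxy_norm
  simp only [Prod.ext_iff, Prod.fst_sub, Prod.snd_sub, Prod.fst_add, Prod.snd_add,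
    Prod.smul_fst, Prod.smul_snd, smul_eq_mul] at hu hv
  set k := max w.1.natAbs w.2.natAbs with hk_def
  have hk : 0 < k := by
    by_contra! hk0
    simp only [hk_def, nonpos_iff_eq_zero, Nat.max_eq_zero_iff, Int.natAbs_eq_zero] at hk0
    exact hw (Prod.ext hk0.1 hk0.2)
  have hwk : (k : ℤ) ^ 2 ≤ w.1 ^ 2 + w.2 ^ 2 := sq_max_natAbs_le w.1 w.2
  have hgkM : ((g * k : ℕ) : ℝ) < M := by
    refine lt_of_pow_lt_pow_left₀ 2 hM (lt_of_le_of_lt ?_ hxyM)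
    have : ((g * k : ℕ) : ℤ) ^ 2 ≤ (x.1 - y.1) ^ 2 + (x.2 - y.2) ^ 2 := by
      rw [hu.1, hu.2]; push_cast; nlinarith [sq_nonneg (g : ℤ)]
    exact_mod_cast this
  have htk : |(t : ℝ)| * k ≤ 2 * R := by
    refine (pow_le_pow_iff_left₀ (by positivity) (by positivity) two_ne_zero).mp ?_
    have : (|t| * k : ℤ) ^ 2 ≤ 4 * (x.1 ^ 2 + x.2 ^ 2) := by
      have hsum : (x.1 + y.1) ^ 2 + (x.2 + y.2) ^ 2 = t ^ 2 * (w.1 ^ 2 + w.2 ^ 2) := by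
        rw [hv.1, hv.2]; ring
      nlinarith [sq_abs t, sq_nonneg t, sq_nonneg (x.1 - y.1), sq_nonneg (x.2 - y.2)]
    calc (|(t : ℝ)| * k) ^ 2 = (((|t| * k : ℤ) ^ 2 : ℤ) : ℝ) := by push_cast; ring
      _ ≤ ((4 * (x.1 ^ 2 + x.2 ^ 2) : ℤ) : ℝ) := by exact_mod_cast this
      _ ≤ (2 * R) ^ 2 := by push_cast at hxR ⊢; linarith
  refine mem_image.mpr ⟨(g, w, t), mem_chordParams hg hk (Int.mem_box.mpr hk_def.symm)
    (Nat.le_floor hgkM.le) htk, ?_⟩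
  simp [chordVectors, Prod.ext_iff, hu.1, hu.2, hv.1, hv.2]

end LatticeChord

open LatticeChord in
/-- For `R ≥ 2` and `1 ≤ M ≤ R`, the number of ordered pairs `(x, y)` of integer
lattice points in the plane with `‖x‖ = ‖y‖ ≤ R` and `0 < ‖x − y‖ < M` is `O(M R log R)`. -/
theorem stmt_5 : ∃ C : ℝ, 0 < C ∧ ∀ R M : ℝ, 2 ≤ R → 1 ≤ M → M ≤ R →
    (Set.ncard {p : (ℤ × ℤ) × (ℤ × ℤ) |
        p.1.1 ^ 2 + p.1.2 ^ 2 = p.2.1 ^ 2 + p.2.2 ^ 2 ∧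
        ((p.1.1 ^ 2 + p.1.2 ^ 2 : ℤ) : ℝ) ≤ R ^ 2 ∧
        p.1 ≠ p.2 ∧
        (((p.1.1 - p.2.1) ^ 2 + (p.1.2 - p.2.2) ^ 2 : ℤ) : ℝ) < M ^ 2} : ℝ)
      ≤ C * M * R * Real.log R := by
  refine ⟨100, by norm_num, fun R M hR hM hMR => ?_⟩
  set n := ⌊M⌋₊
  have hnM : (n : ℝ) ≤ M := Nat.floor_le (by linarith)
  have hn : (1 : ℝ) ≤ n := by exact_mod_cast Nat.le_floor (by simpa using hM)
  have hlog : 1 + Real.log n ≤ 5 / 2 * Real.log R := by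
    have hlog2 := Real.log_two_gt_d9
    have hlog2R := Real.log_le_log (by norm_num) hR
    have hlognR := Real.log_le_log (by linarith) (hnM.trans hMR)
    linarith
  calc _ ≤ (#((chordParams n R).image chordVectors) : ℝ) := by
        rw [← Set.ncard_coe_finset]
        exact Nat.cast_le.mpr <| Set.ncard_le_ncard_of_injOn _
          (fun p hp => sub_add_mem_image_chordVectors (by linarith) (by linarith)
            hp.1 hp.2.1 hp.2.2.1 hp.2.2.2) injective_sub_add.injOn
    _ ≤ #(chordParams n R) := mod_cast card_image_le
    _ ≤ 40 * R * n * (1 + Real.log n) := card_chordParams_le (hnM.trans hMR)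
    _ ≤ 40 * R * M * (5 / 2 * Real.log R) := by gcongr
    _ = 100 * M * R * Real.log R := by ring
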